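/- arXiv:2412.17582 — 2 statements merged into one kernel-verified Lean document; each statement's English description precedes it below -/
import Mathlib

section
/- Let X₁,…,X_n be independent real random variables with mean zero, finite second moments, and |X_i| ≤ M almost surely for all i. Then for every t ≥ 0, P(|Σ_{i=1}^n X_i| ≥ t) ≤ 2 exp(−t² / (2 Σ_{i=1}^n E[X_i²] + (2/3) M t)). -/
/-!
Chernoff's method. Since `(k + 2)! ≥ 2 * 3 ^ k`, comparing the exponential series with a geometric
series gives `exp u ≤ 1 + u + u ^ 2 / (2 * (1 - |u| / 3))` for `|u| < 3`. Integrating, a centered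
`X` with `|X| ≤ M` has `E[exp (c X)] ≤ exp (c ^ 2 E[X ^ 2] / (2 * (1 - |c| M / 3)))` whenever
`|c| M < 3`. Independence multiplies these bounds, and Markov's inequality for `exp (c ∑ Xᵢ)` with
`c = t / (V + M t / 3)`, `V = ∑ E[Xᵢ ^ 2]`, gives the upper tail; the lower tail is the upper tail
of `-Xᵢ`.
-/

open MeasureTheory ProbabilityTheory Real

open Nat in
theorem Real.exp_le_one_add_add_sq_div {u : ℝ} (hu : |u| < 3) :
    exp u ≤ 1 + u + u ^ 2 / (2 * (1 - |u| / 3)) := by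
  have hr₀ : 0 ≤ |u| / 3 := by positivity
  have hr₁ : |u| / 3 < 1 := by linarith
  have hs := summable_pow_div_factorial u
  have hexp : exp u = 1 + u + ∑' n, u ^ (n + 2) / (n + 2)! := by
    rw [exp_eq_exp_ℝ, NormedSpace.exp_eq_tsum_div]
    beta_reduce
    rw [← hs.sum_add_tsum_nat_add 2]
    simp [Finset.sum_range_succ]
  have hterm (n : ℕ) : u ^ (n + 2) / (n + 2)! ≤ u ^ 2 / 2 * (|u| / 3) ^ n := by
    have hfac : (2 * 3 ^ n : ℝ) ≤ (n + 2)! := by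
      rw [add_comm]; exact_mod_cast @factorial_mul_pow_le_factorial 2 n
    calc u ^ (n + 2) / (n + 2)! ≤ |u| ^ (n + 2) / (n + 2)! :=
          div_le_div_of_nonneg_right ((le_abs_self _).trans_eq (abs_pow u _)) (by positivity)
      _ ≤ |u| ^ (n + 2) / (2 * 3 ^ n) := by gcongr
      _ = u ^ 2 / 2 * (|u| / 3) ^ n := by rw [pow_add, div_pow, ← sq_abs u]; ring
  calc exp u ≤ 1 + u + ∑' n : ℕ, u ^ 2 / 2 * (|u| / 3) ^ n := by
        rw [hexp]
        gcongr 1 + u + ?_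
        exact Summable.tsum_le_tsum hterm ((summable_nat_add_iff 2).mpr hs)
          ((summable_geometric_of_lt_one hr₀ hr₁).mul_left _)
    _ = 1 + u + u ^ 2 / (2 * (1 - |u| / 3)) := by
        rw [tsum_mul_left, tsum_geometric_of_lt_one hr₀ hr₁]
        field_simp

lemma Real.exists_bernstein_chernoff_parameter {V M t : ℝ} (hV : 0 < V) (hM : 0 ≤ M)
    (ht : 0 ≤ t) :
    ∃ c, 0 ≤ c ∧ c * M < 3 ∧
      -c * t + c ^ 2 * V / (2 * (1 - c * M / 3)) = -(t ^ 2) / (2 * V + 2 / 3 * M * t) := by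
  have hD : 0 < V + M * t / 3 := by positivity
  refine ⟨t / (V + M * t / 3), by positivity, ?_, ?_⟩
  · rw [div_mul_eq_mul_div, div_lt_iff₀ hD]
    linarith
  · have h : 1 - t / (V + M * t / 3) * M / 3 = V / (V + M * t / 3) := by
      field_simp
      ring
    rw [h]
    field_simp
    ring

namespace ProbabilityTheory

variable {Ω : Type*} [MeasurableSpace Ω] {μ : Measure Ω} {M : ℝ}

section SingleVariable

variable {X : Ω → ℝ}

lemma integrable_sq_of_ae_abs_le [IsFiniteMeasure μ] (hX : AEMeasurable X μ)
    (hM : ∀ᵐ ω ∂μ, |X ω| ≤ M) : Integrable (fun ω => X ω ^ 2) μ := by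
  refine .of_bound (hX.pow_const 2).aestronglyMeasurable (M ^ 2) ?_
  filter_upwards [hM] with ω hω
  rw [norm_pow, Real.norm_eq_abs]
  exact pow_le_pow_left₀ (abs_nonneg _) hω 2

lemma integrable_exp_mul_of_ae_abs_le [IsFiniteMeasure μ] (hX : AEMeasurable X μ)
    (hM : ∀ᵐ ω ∂μ, |X ω| ≤ M) (c : ℝ) : Integrable (fun ω => exp (c * X ω)) μ := by
  refine .of_bound (hX.const_mul c).exp.aestronglyMeasurable (exp (|c| * M)) ?_
  filter_upwards [hM] with ω hω
  rw [Real.norm_eq_abs, abs_exp, exp_le_exp]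
  calc c * X ω ≤ |c| * |X ω| := (le_abs_self _).trans_eq (abs_mul _ _)
    _ ≤ |c| * M := by gcongr

lemma mgf_le_exp_of_ae_abs_le [IsProbabilityMeasure μ] {c : ℝ} (hX : AEMeasurable X μ)
    (hmean : ∫ ω, X ω ∂μ = 0) (hM : ∀ᵐ ω ∂μ, |X ω| ≤ M) (hc : |c| * M < 3) :
    mgf X μ c ≤ exp (c ^ 2 * (∫ ω, X ω ^ 2 ∂μ) / (2 * (1 - |c| * M / 3))) := by
  set K := c ^ 2 / (2 * (1 - |c| * M / 3))
  have hpt : ∀ᵐ ω ∂μ, exp (c * X ω) ≤ 1 + c * X ω + K * X ω ^ 2 := by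
    filter_upwards [hM] with ω hω
    have hcX : |c * X ω| ≤ |c| * M := by rw [abs_mul]; gcongr
    calc exp (c * X ω) ≤ 1 + c * X ω + (c * X ω) ^ 2 / (2 * (1 - |c * X ω| / 3)) :=
          exp_le_one_add_add_sq_div (hcX.trans_lt hc)
      _ ≤ 1 + c * X ω + (c * X ω) ^ 2 / (2 * (1 - |c| * M / 3)) := by
          gcongr
          linarith
      _ = 1 + c * X ω + K * X ω ^ 2 := by ring
  have hint_X : Integrable X μ := .of_bound hX.aestronglyMeasurable M hM
  have hint_lin : Integrable (fun ω => 1 + c * X ω) μ :=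
    (integrable_const 1).add (hint_X.const_mul c)
  have hint_sq : Integrable (fun ω => K * X ω ^ 2) μ :=
    (integrable_sq_of_ae_abs_le hX hM).const_mul K
  calc mgf X μ c ≤ ∫ ω, (1 + c * X ω + K * X ω ^ 2) ∂μ :=
        integral_mono_ae (integrable_exp_mul_of_ae_abs_le hX hM c) (hint_lin.add hint_sq) hpt
    _ = 1 + K * ∫ ω, X ω ^ 2 ∂μ := by
        rw [integral_add hint_lin hint_sq, integral_add (integrable_const 1)
          (hint_X.const_mul c), integral_const_mul, integral_const_mul,
          hmean]
        simp
    _ ≤ exp (c ^ 2 * (∫ ω, X ω ^ 2 ∂μ) / (2 * (1 - |c| * M / 3))) := by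
        rw [mul_div_right_comm]
        linarith [add_one_le_exp (K * ∫ ω, X ω ^ 2 ∂μ)]

end SingleVariable

variable {ι : Type*} [Fintype ι] {X : ι → Ω → ℝ}

lemma iIndepFun.mgf_sum_le_of_ae_abs_le {c : ℝ} (hindep : iIndepFun X μ)
    (hmeas : ∀ i, Measurable (X i)) (hmean : ∀ i, ∫ ω, X i ω ∂μ = 0)
    (hM : ∀ i, ∀ᵐ ω ∂μ, |X i ω| ≤ M) (hc : |c| * M < 3) :
    mgf (∑ i, X i) μ c ≤
      exp (c ^ 2 * (∑ i, ∫ ω, X i ω ^ 2 ∂μ) / (2 * (1 - |c| * M / 3))) := by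
  have := hindep.isProbabilityMeasure
  rw [hindep.mgf_sum hmeas, Finset.mul_sum, Finset.sum_div, exp_sum]
  exact Finset.prod_le_prod (fun i _ => mgf_nonneg)
    fun i _ => mgf_le_exp_of_ae_abs_le (hmeas i).aemeasurable (hmean i) (hM i) hc

lemma sum_ae_eq_zero_of_sum_integral_sq_eq_zero [IsFiniteMeasure μ] (hmeas : ∀ i, Measurable (X i))
    (hM : ∀ i, ∀ᵐ ω ∂μ, |X i ω| ≤ M) (hV : ∑ i, ∫ ω, X i ω ^ 2 ∂μ = 0) :
    ∀ᵐ ω ∂μ, ∑ i, X i ω = 0 := by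
  rw [Finset.sum_eq_zero_iff_of_nonneg fun i _ => integral_nonneg fun ω => sq_nonneg _] at hV
  have hX : ∀ i, ∀ᵐ ω ∂μ, X i ω = 0 := fun i => by
    have hsq := integrable_sq_of_ae_abs_le (hmeas i).aemeasurable (hM i)
    filter_upwards [(integral_eq_zero_iff_of_nonneg (fun ω => sq_nonneg _) hsq).mp
      (hV i (Finset.mem_univ i))] with ω hω
    exact pow_eq_zero_iff two_ne_zero |>.mp hω
  filter_upwards [ae_all_iff.mpr hX] with ω hω
  simp [hω]

theorem iIndepFun.measureReal_sum_ge_le_bernstein {t : ℝ} (hindep : iIndepFun X μ)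
    (hmeas : ∀ i, Measurable (X i)) (hmean : ∀ i, ∫ ω, X i ω ∂μ = 0)
    (hM : ∀ i, ∀ᵐ ω ∂μ, |X i ω| ≤ M) (ht : 0 ≤ t) :
    μ.real {ω | t ≤ ∑ i, X i ω} ≤
      exp (-(t ^ 2) / (2 * (∑ i, ∫ ω, X i ω ^ 2 ∂μ) + 2 / 3 * M * t)) := by
  have := hindep.isProbabilityMeasure
  set V := ∑ i, ∫ ω, X i ω ^ 2 ∂μ
  rcases ht.eq_or_lt with rfl | ht
  · simp
  have hV₀ : 0 ≤ V := Finset.sum_nonneg fun i _ => integral_nonneg fun ω => sq_nonneg (X i ω)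
  rcases hV₀.eq_or_lt with hV | hV
  · have hae : ∀ᵐ ω ∂μ, ¬t ≤ ∑ i, X i ω := by
      filter_upwards [sum_ae_eq_zero_of_sum_integral_sq_eq_zero hmeas hM hV.symm] with ω hω
      simpa [hω] using ht
    have hnull : μ.real {ω | t ≤ ∑ i, X i ω} = 0 := by
      simpa [measureReal_eq_zero_iff] using ae_iff.mp hae
    exact hnull ▸ (exp_pos _).le
  obtain ⟨i, -⟩ := Finset.exists_ne_zero_of_sum_ne_zero hV.ne'
  have hM₀ : 0 ≤ M := by
    obtain ⟨ω, hω⟩ := (hM i).exists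
    exact (abs_nonneg _).trans hω
  obtain ⟨c, hc₀, hcM, hexpo⟩ := exists_bernstein_chernoff_parameter hV hM₀ ht.le
  have hc : |c| * M < 3 := by rwa [abs_of_nonneg hc₀]
  calc μ.real {ω | t ≤ ∑ i, X i ω} ≤ exp (-c * t) * mgf (∑ i, X i) μ c := by
        simpa only [Finset.sum_apply] using measure_ge_le_exp_mul_mgf t hc₀
          (hindep.integrable_exp_mul_sum hmeas fun i _ =>
            integrable_exp_mul_of_ae_abs_le (hmeas i).aemeasurable (hM i) c)
    _ ≤ exp (-c * t) * exp (c ^ 2 * V / (2 * (1 - |c| * M / 3))) := by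
        gcongr
        exact hindep.mgf_sum_le_of_ae_abs_le hmeas hmean hM hc
    _ = exp (-(t ^ 2) / (2 * V + 2 / 3 * M * t)) := by
        rw [← exp_add, abs_of_nonneg hc₀, hexpo]

theorem iIndepFun.measureReal_abs_sum_ge_le_bernstein {t : ℝ} (hindep : iIndepFun X μ)
    (hmeas : ∀ i, Measurable (X i)) (hmean : ∀ i, ∫ ω, X i ω ∂μ = 0)
    (hM : ∀ i, ∀ᵐ ω ∂μ, |X i ω| ≤ M) (ht : 0 ≤ t) :
    μ.real {ω | t ≤ |∑ i, X i ω|} ≤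
      2 * exp (-(t ^ 2) / (2 * (∑ i, ∫ ω, X i ω ^ 2 ∂μ) + 2 / 3 * M * t)) := by
  have hupper := hindep.measureReal_sum_ge_le_bernstein hmeas hmean hM ht
  have hlower := (hindep.comp (fun _ => Neg.neg) fun _ => measurable_neg)
    |>.measureReal_sum_ge_le_bernstein (X := fun i ω => -X i ω) (t := t) (M := M)
      (fun i => (hmeas i).neg) (fun i => by simp [integral_neg, hmean i])
      (fun i => by simpa using hM i) ht
  simp only [neg_sq, Finset.sum_neg_distrib] at hlower
  have hsplit : {ω | t ≤ |∑ i, X i ω|} = {ω | t ≤ ∑ i, X i ω} ∪ {ω | t ≤ -∑ i, X i ω} :=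
    Set.ext fun _ => le_abs (a := t)
  calc μ.real {ω | t ≤ |∑ i, X i ω|}
      ≤ μ.real {ω | t ≤ ∑ i, X i ω} + μ.real {ω | t ≤ -∑ i, X i ω} :=
        hsplit ▸ measureReal_union_le _ _
    _ ≤ _ := by linarith

end ProbabilityTheory

theorem bernstein_inequality_general
    {Ω : Type*} [MeasureSpace Ω] [IsProbabilityMeasure (ℙ : Measure Ω)]
    {n : ℕ} (X : Fin n → Ω → ℝ) (M t : ℝ)
    (hmeas : ∀ i, Measurable (X i))
    (hindep : iIndepFun X ℙ)
    (hmean : ∀ i, ∫ ω, X i ω ∂ℙ = 0)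
    (hbdd : ∀ i, ∀ᵐ ω ∂ℙ, |X i ω| ≤ M)
    (ht : 0 ≤ t) :
    ℙ {ω | t ≤ |∑ i, X i ω|} ≤
      ENNReal.ofReal
        (2 * Real.exp (-(t ^ 2) /
          (2 * (∑ i, ∫ ω, (X i ω) ^ 2 ∂ℙ) + 2 / 3 * M * t))) := by
  rw [ENNReal.le_ofReal_iff_toReal_le (measure_ne_top _ _) (by positivity)]
  exact hindep.measureReal_abs_sum_ge_le_bernstein hmeas hmean hbdd ht

/-- Bernstein's inequality for independent, centered, uniformly bounded real random
variables. -/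
theorem bernstein_inequality
    {Ω : Type*} [MeasureSpace Ω] [IsProbabilityMeasure (ℙ : Measure Ω)]
    {n : ℕ} (X : Fin n → Ω → ℝ) (M t : ℝ)
    (hmeas : ∀ i, Measurable (X i))
    (hindep : iIndepFun X ℙ)
    (hmean : ∀ i, ∫ ω, X i ω ∂ℙ = 0)
    (hL2 : ∀ i, Integrable (fun ω => (X i ω) ^ 2) ℙ)
    (hbdd : ∀ i, ∀ᵐ ω ∂ℙ, |X i ω| ≤ M)
    (ht : 0 ≤ t) :
    ℙ {ω | t ≤ |∑ i, X i ω|} ≤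
      ENNReal.ofReal
        (2 * Real.exp (-(t ^ 2) /
          (2 * (∑ i, ∫ ω, (X i ω) ^ 2 ∂ℙ) + 2 / 3 * M * t))) :=
  bernstein_inequality_general X M t hmeas hindep hmean hbdd ht
end

section
/- Let q ∈ ℕ with q ≥ 2 and let σ_q(x) = max{0,x}^q. There exists a one-hidden-layer σ_q-neural network realizing the multiplication map exactly: there exist finitely many a_i, b_i, c_i, d_i ∈ ℝ such that x·y = Σ_i a_i σ_q(b_i x + c_i y + d_i) for all x, y ∈ ℝ. -/
/-!
Since the moment matrix `(k ^ n)` with `0 ≤ k, n ≤ q` is an invertible Vandermonde matrix, every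
power `u ^ j` with `j ≤ q` is a linear combination of the translates `(u + k) ^ q`, `k = 0, …, q`.
Each such translate is realised by two neurons, as `u ^ q = σ_q(u) + (-1) ^ q σ_q(-u)`.
Hence squares of affine forms are realised, and `x * y = ((x + y) ^ 2 - (x - y) ^ 2) / 4`.
-/

open Finset

theorem exists_pow_eq_sum_translate_pow {K : Type*} [Field K] [CharZero K] {j q : ℕ}
    (hj : j ≤ q) :
    ∃ c : Fin (q + 1) → K, ∀ u : K, u ^ j = ∑ k, c k * (u + (k : ℕ)) ^ q := by
  set V := Matrix.vandermonde (fun k : Fin (q + 1) => ((k : ℕ) : K))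
  have hV : IsUnit V := by
    rw [Matrix.isUnit_iff_isUnit_det, isUnit_iff_ne_zero, Matrix.det_vandermonde_ne_zero_iff]
    intro k l hkl
    exact Fin.ext (Nat.cast_injective hkl)
  -- the moments `∑ c k * k ^ n` pick out the coefficient of `u ^ j` in the binomial expansion
  set w : ℕ → K := fun n => if n = q - j then ((q.choose j : ℕ) : K)⁻¹ else 0
  obtain ⟨c, hc⟩ := Matrix.vecMul_surjective_iff_isUnit.mpr hV (fun n => w n)
  have hmoment : ∀ n ∈ range (q + 1), ∑ k : Fin (q + 1), c k * ((k : ℕ) : K) ^ n = w n := by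
    intro n hn
    simpa [V, Matrix.vecMul, dotProduct, Matrix.vandermonde] using
      congrFun hc ⟨n, mem_range.mp hn⟩
  have hchoose : ((q.choose j : ℕ) : K) ≠ 0 := by exact_mod_cast (Nat.choose_pos hj).ne'
  refine ⟨c, fun u => ?_⟩
  calc u ^ j = ∑ m ∈ range (q + 1), u ^ m * (q.choose m : K) * w (q - m) := by
        rw [sum_eq_single_of_mem j (mem_range.mpr (by omega))]
        · simp [w, hchoose]
        · intro m hm hmj
          have : q - m ≠ q - j := by have := mem_range.mp hm; omega
          simp [w, this]
    _ = ∑ m ∈ range (q + 1), u ^ m * (q.choose m : K) *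
          ∑ k : Fin (q + 1), c k * ((k : ℕ) : K) ^ (q - m) :=
        sum_congr rfl fun m _ => by rw [hmoment _ (mem_range.mpr (by omega))]
    _ = ∑ k, c k * (u + (k : ℕ)) ^ q := by
        simp_rw [add_pow, mul_sum]
        rw [sum_comm]
        exact sum_congr rfl fun m _ => sum_congr rfl fun k _ => by ring

theorem pow_eq_max_pow_add_neg_one_pow_mul_max_pow {q : ℕ} (hq : q ≠ 0) (u : ℝ) :
    u ^ q = max 0 u ^ q + (-1) ^ q * max 0 (-u) ^ q := by
  rcases le_total 0 u with h | h
  · rw [max_eq_right h, max_eq_left (neg_nonpos.mpr h), zero_pow hq]; ring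
  · rw [max_eq_left h, max_eq_right (neg_nonneg.mpr h), zero_pow hq, ← mul_pow]; ring

def IsRePUNetwork (q : ℕ) (f : ℝ → ℝ → ℝ) : Prop :=
  ∃ (m : ℕ) (a b c d : Fin m → ℝ),
    ∀ x y : ℝ, f x y = ∑ i, a i * max 0 (b i * x + c i * y + d i) ^ q

namespace IsRePUNetwork

variable {q : ℕ}

theorem zero : IsRePUNetwork q 0 :=
  ⟨0, Fin.elim0, Fin.elim0, Fin.elim0, Fin.elim0, fun _ _ => by simp⟩

theorem neuron (b c d : ℝ) : IsRePUNetwork q fun x y => max 0 (b * x + c * y + d) ^ q :=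
  ⟨1, fun _ => 1, fun _ => b, fun _ => c, fun _ => d, fun _ _ => by simp⟩

theorem add {f g : ℝ → ℝ → ℝ} (hf : IsRePUNetwork q f) (hg : IsRePUNetwork q g) :
    IsRePUNetwork q (f + g) := by
  obtain ⟨m, a, b, c, d, hf⟩ := hf
  obtain ⟨n, a', b', c', d', hg⟩ := hg
  refine ⟨m + n, Fin.append a a', Fin.append b b', Fin.append c c', Fin.append d d',
    fun x y => ?_⟩
  simp [Fin.sum_univ_add, hf, hg]

theorem const_mul {f : ℝ → ℝ → ℝ} (r : ℝ) (hf : IsRePUNetwork q f) :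
    IsRePUNetwork q fun x y => r * f x y := by
  obtain ⟨m, a, b, c, d, hf⟩ := hf
  exact ⟨m, fun i => r * a i, b, c, d, fun x y => by simp [hf, mul_sum, mul_assoc]⟩

theorem sum {ι : Type*} (s : Finset ι) {f : ι → ℝ → ℝ → ℝ}
    (hf : ∀ i ∈ s, IsRePUNetwork q (f i)) : IsRePUNetwork q fun x y => ∑ i ∈ s, f i x y := by
  classical
  induction s using Finset.induction_on with
  | empty =>
    simp only [sum_empty]
    exact zero
  | insert i s hi ih =>
    simp_rw [sum_insert hi]
    exact add (hf i (mem_insert_self i s)) (ih fun j hj => hf j (mem_insert_of_mem hj))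

theorem affine_pow (hq : q ≠ 0) (b c d : ℝ) :
    IsRePUNetwork q fun x y => (b * x + c * y + d) ^ q := by
  simp_rw [pow_eq_max_pow_add_neg_one_pow_mul_max_pow hq (_ + d), neg_add, ← neg_mul]
  exact add (neuron b c d) (const_mul _ (neuron (-b) (-c) (-d)))

theorem affine_pow_of_le {j : ℕ} (hq : q ≠ 0) (hj : j ≤ q) (b c d : ℝ) :
    IsRePUNetwork q fun x y => (b * x + c * y + d) ^ j := by
  obtain ⟨coeff, hcoeff⟩ := exists_pow_eq_sum_translate_pow (K := ℝ) hj
  simp_rw [hcoeff]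
  exact sum _ fun k _ => const_mul _ (by simpa only [add_assoc] using affine_pow hq b c (d + k))

theorem mul (hq : 2 ≤ q) : IsRePUNetwork q fun x y => x * y := by
  have hsq (c : ℝ) := affine_pow_of_le (j := 2) (by omega) hq 1 c 0
  have := add (const_mul (1 / 4) (hsq 1)) (const_mul (-1 / 4) (hsq (-1)))
  convert this using 1
  funext x y
  simp only [Pi.add_apply]
  ring

end IsRePUNetwork

/-- A one-hidden-layer `σ_q`-network (with `σ_q(x) = max{0,x}^q`, `q ≥ 2`) can realize
the multiplication map exactly. -/
theorem repu_exact_multiplication (q : ℕ) (hq : 2 ≤ q) :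
    ∃ (m : ℕ) (a b c d : Fin m → ℝ),
      ∀ x y : ℝ, x * y = ∑ i, a i * max 0 (b i * x + c i * y + d i) ^ q :=
  IsRePUNetwork.mul hq
end
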